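/- Let $L : \mathbb{R}^d \times \mathbb{R}^d \to \mathbb{R}$ be $C^2$, $\rho > 0$, $\alpha \in (0,1)$, and suppose $x, y \in C^2([0,T],\mathbb{R}^d)$ satisfy the restricted fractional Euler–Lagrange equations $\frac{d}{dt}\frac{\partial L}{\partial \dot x}(x,\dot x) - \frac{\partial L}{\partial x}(x,\dot x) = -\rho D^{(2\alpha)}_- x$ and $\frac{d}{dt}\frac{\partial L}{\partial \dot y}(y,\dot y) - \frac{\partial L}{\partial y}(y,\dot y) = -\rho D^{(2\alpha)}_+ y$. Then for every variation $\delta x \in C^2([0,T],\mathbb{R}^d)$ with $\delta x(0) = \delta x(T) = 0$, the first variation of the action $\mathcal{L}(x,y) = \int_0^T \big(L(x,\dot x) + L(y,\dot y) - \rho\, D^{\alpha}_- x \cdot D^{\alpha}_+ y\big)\,dt$ along the restricted varied curves $x_{\epsilon} = x + \epsilon\,\delta x$, $y_{\epsilon} = y + \epsilon\,\delta x$ vanishes: $\frac{d}{d\epsilon}\Big|_{\epsilon=0}\mathcal{L}(x_{\epsilon}, y_{\epsilon}) = 0$. -/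

import Mathlib

open Real intervalIntegral MeasureTheory InnerProductSpace

private lemma small_of_no_three {S : Set ℝ}
    (h : ¬ ∃ a b c, a ∈ S ∧ b ∈ S ∧ c ∈ S ∧ a ≠ b ∧ a ≠ c ∧ b ≠ c) :
    ∃ u v : ℝ, ∀ ε ∈ S, ε = u ∨ ε = v := by
  by_cases h1 : ∃ a, a ∈ S
  · obtain ⟨a, ha⟩ := h1
    by_cases h2 : ∃ b ∈ S, b ≠ a
    · obtain ⟨b, hb, hba⟩ := h2
      refine ⟨a, b, fun ε hε => ?_⟩
      by_contra hc
      push_neg at hc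
      exact h ⟨a, b, ε, ha, hb, hε, Ne.symm hba, Ne.symm hc.1, Ne.symm hc.2⟩
    · push_neg at h2
      exact ⟨a, a, fun ε hε => Or.inl (h2 ε hε)⟩
  · push_neg at h1
    exact ⟨0, 0, fun ε hε => absurd hε (h1 ε)⟩

private lemma quad_B_eq_zero {A B C u v : ℝ}
    (h : ∀ ε : ℝ, ε ≠ u → ε ≠ v → A + ε * B + ε ^ 2 * C = 0) : B = 0 := by
  have hne : ∀ k : ℝ, 0 ≤ k → (|u| + |v| + 1 + k ≠ u ∧ |u| + |v| + 1 + k ≠ v) := by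
    intro k hk
    have h1 := abs_nonneg u
    have h2 := abs_nonneg v
    have h3 := le_abs_self u
    have h4 := le_abs_self v
    constructor <;> intro hEq <;> linarith
  set M : ℝ := |u| + |v| + 1 with hM
  have e1 := h (M + 0) (hne 0 le_rfl).1 (hne 0 le_rfl).2
  rw [add_zero] at e1
  have e2 := h (M + 1) (hne 1 one_pos.le).1 (hne 1 one_pos.le).2
  have e3 := h (M + 2) (hne 2 two_pos.le).1 (hne 2 two_pos.le).2
  have hC : C = 0 := by linear_combination (e1 + e3 - 2 * e2) / 2
  linear_combination e2 - e1 - (2 * M + 1) * hC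

private lemma integrable_coeffs {a b c : ℝ → ℝ} {T e1 e2 e3 : ℝ}
    (h1 : IntervalIntegrable (fun t => a t + e1 * b t + e1 ^ 2 * c t) volume 0 T)
    (h2 : IntervalIntegrable (fun t => a t + e2 * b t + e2 ^ 2 * c t) volume 0 T)
    (h3 : IntervalIntegrable (fun t => a t + e3 * b t + e3 ^ 2 * c t) volume 0 T)
    (h12 : e1 ≠ e2) (h13 : e1 ≠ e3) (h23 : e2 ≠ e3) :
    IntervalIntegrable a volume 0 T ∧ IntervalIntegrable b volume 0 T ∧
      IntervalIntegrable c volume 0 T := by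
  have d12 : e1 - e2 ≠ 0 := sub_ne_zero.mpr h12
  have d13 : e1 - e3 ≠ 0 := sub_ne_zero.mpr h13
  have d23 : e2 - e3 ≠ 0 := sub_ne_zero.mpr h23
  have k1 : IntervalIntegrable (fun t => b t + (e1 + e2) * c t) volume 0 T := by
    have := (h1.sub h2).const_mul ((e1 - e2)⁻¹)
    have heq : (fun t => (e1 - e2)⁻¹ * ((a t + e1 * b t + e1 ^ 2 * c t)
        - (a t + e2 * b t + e2 ^ 2 * c t))) = fun t => b t + (e1 + e2) * c t := by
      funext t; field_simp; ring
    rwa [heq] at this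
  have k2 : IntervalIntegrable (fun t => b t + (e1 + e3) * c t) volume 0 T := by
    have := (h1.sub h3).const_mul ((e1 - e3)⁻¹)
    have heq : (fun t => (e1 - e3)⁻¹ * ((a t + e1 * b t + e1 ^ 2 * c t)
        - (a t + e3 * b t + e3 ^ 2 * c t))) = fun t => b t + (e1 + e3) * c t := by
      funext t; field_simp; ring
    rwa [heq] at this
  have hc : IntervalIntegrable c volume 0 T := by
    have := (k1.sub k2).const_mul ((e2 - e3)⁻¹)
    have heq : (fun t => (e2 - e3)⁻¹ * ((b t + (e1 + e2) * c t) - (b t + (e1 + e3) * c t)))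
        = c := by
      funext t; field_simp; ring
    rwa [heq] at this
  have hb : IntervalIntegrable b volume 0 T := by
    have := k1.sub (hc.const_mul (e1 + e2))
    have heq : (fun t => (b t + (e1 + e2) * c t) - (e1 + e2) * c t) = b := by
      funext t; ring
    rwa [heq] at this
  refine ⟨?_, hb, hc⟩
  have := (h1.sub (hb.const_mul e1)).sub (hc.const_mul (e1 ^ 2))
  have heq : (fun t => (a t + e1 * b t + e1 ^ 2 * c t - e1 * b t) - e1 ^ 2 * c t) = a := by
    funext t; ring
  rwa [heq] at this

private lemma II_of_eqOn {f g : ℝ → ℝ} {T : ℝ} (hg : Continuous g)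
    (h : ∀ t ∈ Set.uIcc (0:ℝ) T, f t = g t) : IntervalIntegrable f volume 0 T := by
  refine (hg.intervalIntegrable 0 T).congr ?_
  exact fun t ht => (h t (Set.uIoc_subset_uIcc ht)).symm

set_option linter.unusedSectionVars false



variable {E : Type*} [NormedAddCommGroup E] [InnerProductSpace ℝ E] [CompleteSpace E]

private noncomputable def dualIsoR (E : Type*) [NormedAddCommGroup E]
    [InnerProductSpace ℝ E] [CompleteSpace E] : (E →L[ℝ] ℝ) →L[ℝ] E :=
  LinearMap.mkContinuous
    { toFun := fun A => (toDual ℝ E).symm A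
      map_add' := fun A B => map_add _ A B
      map_smul' := fun r A => by
        simp only [RingHom.id_apply]
        rw [LinearIsometryEquiv.map_smulₛₗ]
        simp [starRingEnd_apply] }
    1 (fun A => by simp)

@[simp] private lemma dualIsoR_apply (A : E →L[ℝ] ℝ) :
    dualIsoR E A = (toDual ℝ E).symm A := rfl

private lemma fderiv_apply_grads
    {L : E → E → ℝ} (hL : ContDiff ℝ 2 (fun qv : E × E => L qv.1 qv.2))
    {Lq Lv : E → E → E}
    (hLq : ∀ q v, HasGradientAt (fun q' => L q' v) (Lq q v) q)
    (hLv : ∀ q v, HasGradientAt (fun v' => L q v') (Lv q v) v)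
    (q v : E) (h k : E) :
    fderiv ℝ (fun qv : E × E => L qv.1 qv.2) (q, v) (h, k)
      = (inner ℝ (Lq q v) h : ℝ) + (inner ℝ (Lv q v) k : ℝ) := by
  set f := fun qv : E × E => L qv.1 qv.2 with hf
  have hdf : HasFDerivAt f (fderiv ℝ f (q, v)) (q, v) :=
    ((hL.differentiable (by norm_num)) (q, v)).hasFDerivAt
  have hinl : HasFDerivAt (fun q' : E => ((q', v) : E × E))
      ((ContinuousLinearMap.id ℝ E).prod (0 : E →L[ℝ] E)) q :=
    HasFDerivAt.prodMk (hasFDerivAt_id q) (hasFDerivAt_const v q)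
  have hinr : HasFDerivAt (fun v' : E => ((q, v') : E × E))
      ((0 : E →L[ℝ] E).prod (ContinuousLinearMap.id ℝ E)) v :=
    HasFDerivAt.prodMk (hasFDerivAt_const q v) (hasFDerivAt_id v)
  have h1 : HasFDerivAt (fun q' : E => L q' v)
      ((fderiv ℝ f (q, v)).comp ((ContinuousLinearMap.id ℝ E).prod (0 : E →L[ℝ] E))) q :=
    by have := hdf.comp q hinl; exact this
  have h2 : HasFDerivAt (fun v' : E => L q v')
      ((fderiv ℝ f (q, v)).comp ((0 : E →L[ℝ] E).prod (ContinuousLinearMap.id ℝ E))) v :=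
    by have := hdf.comp v hinr; exact this
  have e1 := ((hLq q v).hasFDerivAt).unique h1
  have e2 := ((hLv q v).hasFDerivAt).unique h2
  have v1 : (inner ℝ (Lq q v) h : ℝ) = fderiv ℝ f (q, v) (h, 0) := by
    have := congrFun (congrArg DFunLike.coe e1) h
    simpa [toDual_apply_apply] using this
  have v2 : (inner ℝ (Lv q v) k : ℝ) = fderiv ℝ f (q, v) (0, k) := by
    have := congrFun (congrArg DFunLike.coe e2) k
    simpa [toDual_apply_apply] using this
  have : ((h, k) : E × E) = (h, 0) + (0, k) := by simp
  rw [this, map_add, v1, v2]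

private lemma contDiff_grad_snd
    {L : E → E → ℝ} (hL : ContDiff ℝ 2 (fun qv : E × E => L qv.1 qv.2))
    {Lv : E → E → E}
    (hLv : ∀ q v, HasGradientAt (fun v' => L q v') (Lv q v) v) :
    ContDiff ℝ 1 (fun qv : E × E => Lv qv.1 qv.2) := by
  set f := fun qv : E × E => L qv.1 qv.2 with hf
  set P : E →L[ℝ] E × E := (0 : E →L[ℝ] E).prod (ContinuousLinearMap.id ℝ E) with hP
  have key : (fun qv : E × E => Lv qv.1 qv.2)
      = fun qv => dualIsoR E (((ContinuousLinearMap.compL ℝ E (E × E) ℝ).flip P) (fderiv ℝ f qv)) := by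
    funext qv
    have hdf : HasFDerivAt f (fderiv ℝ f qv) qv :=
      ((hL.differentiable (by norm_num)) qv).hasFDerivAt
    have hinr : HasFDerivAt (fun v' : E => ((qv.1, v') : E × E)) P qv.2 :=
      HasFDerivAt.prodMk (hasFDerivAt_const qv.1 qv.2) (hasFDerivAt_id qv.2)
    have h2 : HasFDerivAt (fun v' : E => L qv.1 v') ((fderiv ℝ f qv).comp P) qv.2 := by
      have := hdf.comp qv.2 hinr
      exact this
    have e2 := ((hLv qv.1 qv.2).hasFDerivAt).unique h2
    simp only [dualIsoR_apply, ContinuousLinearMap.flip_apply, ContinuousLinearMap.compL_apply]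
    rw [← e2]
    simp
  rw [key]
  exact ((dualIsoR E).comp ((ContinuousLinearMap.compL ℝ E (E × E) ℝ).flip P)).contDiff.comp
    (hL.fderiv_right (by norm_num))

private lemma contDiff_grad_fst
    {L : E → E → ℝ} (hL : ContDiff ℝ 2 (fun qv : E × E => L qv.1 qv.2))
    {Lq : E → E → E}
    (hLq : ∀ q v, HasGradientAt (fun q' => L q' v) (Lq q v) q) :
    ContDiff ℝ 1 (fun qv : E × E => Lq qv.1 qv.2) := by
  have hswap : ContDiff ℝ 2 (fun qv : E × E => L qv.2 qv.1) :=
    hL.comp (ContDiff.prodMk contDiff_snd contDiff_fst)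
  have := contDiff_grad_snd (L := fun v q => L q v) hswap
    (Lv := fun v q => Lq q v) (fun v q => hLq q v)
  exact this.comp (ContDiff.prodMk contDiff_snd contDiff_fst)



variable {F : Type*} [NormedAddCommGroup F] [NormedSpace ℝ F]

private lemma contDiff_one_deriv {x : ℝ → F} (hx : ContDiff ℝ 2 x) :
    ContDiff ℝ 1 (deriv x) := by
  have h2 : (2 : WithTop ℕ∞) = 1 + 1 := by norm_num
  rw [h2, contDiff_succ_iff_deriv] at hx
  exact hx.2.2

variable {E : Type*} [NormedAddCommGroup E] [InnerProductSpace ℝ E] [CompleteSpace E]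


private lemma hasDerivAt_Lpart
    {L : E → E → ℝ} (hL : ContDiff ℝ 2 (fun qv : E × E => L qv.1 qv.2))
    {Lq Lv : E → E → E}
    (hLq : ∀ q v, HasGradientAt (fun q' => L q' v) (Lq q v) q)
    (hLv : ∀ q v, HasGradientAt (fun v' => L q v') (Lv q v) v)
    (T : ℝ) {x δx : ℝ → E} (hx : ContDiff ℝ 2 x) (hδx : ContDiff ℝ 2 δx) :
    HasDerivAt (fun ε : ℝ => ∫ t in (0:ℝ)..T, L (x t + ε • δx t) (deriv x t + ε • deriv δx t))
      (∫ t in (0:ℝ)..T, ((inner ℝ (Lq (x t) (deriv x t)) (δx t) : ℝ)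
        + (inner ℝ (Lv (x t) (deriv x t)) (deriv δx t) : ℝ))) 0 := by
  set f := fun qv : E × E => L qv.1 qv.2 with hf
  have hfd : Differentiable ℝ f := hL.differentiable (by norm_num)
  have hfc : Continuous f := hL.continuous
  have hf1 : Continuous (fderiv ℝ f) := (hL.fderiv_right (m := 1) (by norm_num)).continuous
  have hxc : Continuous x := hx.continuous
  have hx' : Continuous (deriv x) := (contDiff_one_deriv hx).continuous
  have hδc : Continuous δx := hδx.continuous
  have hδ' : Continuous (deriv δx) := (contDiff_one_deriv hδx).continuous
  set γ : ℝ → ℝ → E × E :=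
    fun ε t => (x t + ε • δx t, deriv x t + ε • deriv δx t) with hγ
  have hγj : Continuous (fun p : ℝ × ℝ => γ p.1 p.2) := by
    apply Continuous.prodMk
    · exact ((hxc.comp continuous_snd).add
        ((continuous_fst).smul (hδc.comp continuous_snd)))
    · exact ((hx'.comp continuous_snd).add
        ((continuous_fst).smul (hδ'.comp continuous_snd)))
  have hγc : ∀ ε, Continuous (γ ε) := fun ε =>
    hγj.comp (Continuous.prodMk continuous_const continuous_id)
  set K : Set (E × E) := (fun p : ℝ × ℝ => γ p.1 p.2) '' (Set.Icc (-1:ℝ) 1 ×ˢ Set.uIcc 0 T)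
    with hK
  have hKcomp : IsCompact K := (isCompact_Icc.prod isCompact_uIcc).image hγj
  obtain ⟨C, hC⟩ := hKcomp.exists_bound_of_continuousOn (f := fderiv ℝ f) (by exact hf1.continuousOn)
  set Cb := max C 0 with hCb
  set bound : ℝ → ℝ := fun t => Cb * ‖(δx t, deriv δx t)‖ with hbound
  set F' : ℝ → ℝ → ℝ := fun ε t => fderiv ℝ f (γ ε t) (δx t, deriv δx t) with hF'
  have key := intervalIntegral.hasDerivAt_integral_of_dominated_loc_of_deriv_le
    (μ := volume) (F := fun ε t => f (γ ε t)) (F' := F') (x₀ := (0:ℝ)) (bound := bound)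
    (a := 0) (b := T) (s := Metric.ball (0:ℝ) 1) (Metric.ball_mem_nhds 0 one_pos)
    (Filter.Eventually.of_forall fun ε => ((hfc.comp (hγc ε)).aestronglyMeasurable))
    ((hfc.comp (hγc 0)).intervalIntegrable 0 T)
    (((hf1.comp (hγc 0)).clm_apply (hδc.prodMk hδ')).aestronglyMeasurable)
    ?_ ?_ ?_
  · have heq1 : (fun ε : ℝ => ∫ t in (0:ℝ)..T, f (γ ε t))
        = fun ε : ℝ => ∫ t in (0:ℝ)..T, L (x t + ε • δx t) (deriv x t + ε • deriv δx t) := rfl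
    have heq2 : ∫ t in (0:ℝ)..T, F' 0 t
        = ∫ t in (0:ℝ)..T, ((inner ℝ (Lq (x t) (deriv x t)) (δx t) : ℝ)
            + (inner ℝ (Lv (x t) (deriv x t)) (deriv δx t) : ℝ)) := by
      apply intervalIntegral.integral_congr
      intro t _
      have : γ 0 t = (x t, deriv x t) := by simp [hγ]
      rw [hF']
      simp only [this]
      exact fderiv_apply_grads hL hLq hLv _ _ _ _
    rw [← heq1, ← heq2]
    exact key.2
  · -- bound
    refine MeasureTheory.ae_of_all _ (fun t ht ε hε => ?_)
    have hmem : γ ε t ∈ K := by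
      refine ⟨(ε, t), ⟨?_, Set.uIoc_subset_uIcc ht⟩, rfl⟩
      have : |ε| < 1 := by simpa [Real.dist_eq] using Metric.mem_ball.mp hε
      have := abs_le.mp this.le
      exact Set.mem_Icc.mpr this
    calc ‖F' ε t‖ ≤ ‖fderiv ℝ f (γ ε t)‖ * ‖(δx t, deriv δx t)‖ :=
          ContinuousLinearMap.le_opNorm _ _
      _ ≤ Cb * ‖(δx t, deriv δx t)‖ :=
          mul_le_mul_of_nonneg_right ((hC _ hmem).trans (le_max_left _ _)) (norm_nonneg _)
  · exact (continuous_const.mul ((hδc.prodMk hδ').norm)).intervalIntegrable 0 T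
  · refine MeasureTheory.ae_of_all _ (fun t ht ε hε => ?_)
    have h1 : HasDerivAt (fun e : ℝ => x t + e • δx t) (δx t) ε := by
      simpa using ((hasDerivAt_id ε).smul_const (δx t)).const_add (x t)
    have h2 : HasDerivAt (fun e : ℝ => deriv x t + e • deriv δx t) (deriv δx t) ε := by
      simpa using ((hasDerivAt_id ε).smul_const (deriv δx t)).const_add (deriv x t)
    have hγd : HasDerivAt (fun e : ℝ => γ e t) (δx t, deriv δx t) ε := HasDerivAt.prodMk h1 h2
    exact (hfd (γ ε t)).hasFDerivAt.comp_hasDerivAt ε hγd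

private lemma variation_integral_eq
    {L : E → E → ℝ} (hL : ContDiff ℝ 2 (fun qv : E × E => L qv.1 qv.2))
    {Lq Lv : E → E → E}
    (hLq : ∀ q v, HasGradientAt (fun q' => L q' v) (Lq q v) q)
    (hLv : ∀ q v, HasGradientAt (fun v' => L q v') (Lv q v) v)
    {T ρ : ℝ} (hT : 0 ≤ T)
    {x w δx : ℝ → E} (hx : ContDiff ℝ 2 x) (hδx : ContDiff ℝ 2 δx)
    (hδx0 : δx 0 = 0) (hδxT : δx T = 0)
    (hEL : ∀ t ∈ Set.Icc (0:ℝ) T,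
      deriv (fun s => Lv (x s) (deriv x s)) t - Lq (x t) (deriv x t) = -(ρ • w t)) :
    ∫ t in (0:ℝ)..T, ((inner ℝ (Lq (x t) (deriv x t)) (δx t) : ℝ)
        + (inner ℝ (Lv (x t) (deriv x t)) (deriv δx t) : ℝ))
      = ρ * ∫ t in (0:ℝ)..T, (inner ℝ (w t) (δx t) : ℝ) := by
  have hLvj : ContDiff ℝ 1 (fun p : E × E => Lv p.1 p.2) := contDiff_grad_snd hL hLv
  have hLqj : ContDiff ℝ 1 (fun p : E × E => Lq p.1 p.2) := contDiff_grad_fst hL hLq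
  have hcurve : ContDiff ℝ 1 (fun s : ℝ => (x s, deriv x s)) :=
    ContDiff.prodMk (hx.of_le (by norm_num)) (contDiff_one_deriv hx)
  have hp : ContDiff ℝ 1 (fun s => Lv (x s) (deriv x s)) := hLvj.comp hcurve
  have hpc : Continuous (fun s => Lv (x s) (deriv x s)) := hp.continuous
  have hp' : Continuous (deriv (fun s => Lv (x s) (deriv x s))) :=
    hp.continuous_deriv le_rfl
  have hqc : Continuous (fun s => Lq (x s) (deriv x s)) :=
    hLqj.continuous.comp hcurve.continuous
  have hδc : Continuous δx := hδx.continuous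
  have hδ' : Continuous (deriv δx) := (contDiff_one_deriv hδx).continuous
  set p := fun s => Lv (x s) (deriv x s) with hpdef
  -- FTC part
  have hder : ∀ t : ℝ, HasDerivAt (fun s => (inner ℝ (p s) (δx s) : ℝ))
      ((inner ℝ (p t) (deriv δx t) : ℝ) + (inner ℝ (deriv p t) (δx t) : ℝ)) t := by
    intro t
    exact HasDerivAt.inner ℝ ((hp.differentiable one_ne_zero t).hasDerivAt)
      ((hδx.differentiable (by norm_num) t).hasDerivAt)
  have hFTC : ∫ t in (0:ℝ)..T,
      ((inner ℝ (p t) (deriv δx t) : ℝ) + (inner ℝ (deriv p t) (δx t) : ℝ)) = 0 := by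
    rw [intervalIntegral.integral_eq_sub_of_hasDerivAt (fun t _ => hder t)
      (((hpc.inner hδ').add (hp'.inner hδc)).intervalIntegrable 0 T)]
    rw [hδx0, hδxT]
    simp
  have hsplit : ∫ t in (0:ℝ)..T, ((inner ℝ (Lq (x t) (deriv x t)) (δx t) : ℝ)
        + (inner ℝ (Lv (x t) (deriv x t)) (deriv δx t) : ℝ))
      = (∫ t in (0:ℝ)..T, ((inner ℝ (p t) (deriv δx t) : ℝ) + (inner ℝ (deriv p t) (δx t) : ℝ)))
        + ∫ t in (0:ℝ)..T, (inner ℝ (Lq (x t) (deriv x t) - deriv p t) (δx t) : ℝ) := by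
    rw [← intervalIntegral.integral_add
      (((hpc.inner hδ').add (hp'.inner hδc)).intervalIntegrable 0 T)
      (((hqc.sub hp').inner hδc).intervalIntegrable 0 T)]
    apply intervalIntegral.integral_congr
    intro t _
    simp only [inner_sub_left]
    ring
  rw [hsplit, hFTC, zero_add]
  have hcongr : ∫ t in (0:ℝ)..T, (inner ℝ (Lq (x t) (deriv x t) - deriv p t) (δx t) : ℝ)
      = ∫ t in (0:ℝ)..T, ρ * (inner ℝ (w t) (δx t) : ℝ) := by
    apply intervalIntegral.integral_congr
    intro t ht
    rw [Set.uIcc_of_le hT] at ht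
    have h1 := hEL t ht
    have h2 : Lq (x t) (deriv x t) - deriv p t = ρ • w t := by
      have := congrArg Neg.neg h1
      rw [neg_neg, neg_sub] at this
      exact this
    simp only [h2, real_inner_smul_left]
  rw [hcongr, intervalIntegral.integral_const_mul]

set_option maxHeartbeats 1000000

/-- Restricted fractional Hamilton's principle: solutions of the restricted
fractional Euler–Lagrange equations make the first variation of the action
vanish under restricted variations. -/
theorem restricted_fractional_EL_sufficient (d : ℕ) (T ρ α : ℝ)
    (hT : 0 < T) (hρ : 0 < ρ) (hα : α ∈ Set.Ioo (0:ℝ) 1)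
    (L : EuclideanSpace ℝ (Fin d) → EuclideanSpace ℝ (Fin d) → ℝ)
    (hL : ContDiff ℝ 2 (fun qv : EuclideanSpace ℝ (Fin d) × EuclideanSpace ℝ (Fin d) => L qv.1 qv.2))
    (Lq Lv : EuclideanSpace ℝ (Fin d) → EuclideanSpace ℝ (Fin d) → EuclideanSpace ℝ (Fin d))
    (hLq : ∀ q v, HasGradientAt (fun q' => L q' v) (Lq q v) q)
    (hLv : ∀ q v, HasGradientAt (fun v' => L q v') (Lv q v) v)
    -- abstract left and right Riemann–Liouville fractional derivative operators
    (Dm Dp : (ℝ → EuclideanSpace ℝ (Fin d)) → ℝ → EuclideanSpace ℝ (Fin d))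
    (hDm_add : ∀ u v, Dm (u + v) = Dm u + Dm v)
    (hDm_smul : ∀ (c : ℝ) u, Dm (c • u) = c • Dm u)
    (hDp_add : ∀ u v, Dp (u + v) = Dp u + Dp v)
    (hDp_smul : ∀ (c : ℝ) u, Dp (c • u) = c • Dp u)
    -- fractional integration by parts for the curves involved
    (hibp : ∀ u v : ℝ → EuclideanSpace ℝ (Fin d),
      ∫ t in (0:ℝ)..T, (inner ℝ (u t) (Dm v t) : ℝ)
        = ∫ t in (0:ℝ)..T, (inner ℝ (v t) (Dp u t) : ℝ))
    (x y : ℝ → EuclideanSpace ℝ (Fin d))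
    (hx : ContDiff ℝ 2 x) (hy : ContDiff ℝ 2 y)
    -- restricted fractional Euler–Lagrange equations (semigroup: D^{2α} = Dσ ∘ Dσ)
    (hELx : ∀ t ∈ Set.Icc (0:ℝ) T,
      deriv (fun s => Lv (x s) (deriv x s)) t - Lq (x t) (deriv x t)
        = -(ρ • Dm (Dm x) t))
    (hELy : ∀ t ∈ Set.Icc (0:ℝ) T,
      deriv (fun s => Lv (y s) (deriv y s)) t - Lq (y t) (deriv y t)
        = -(ρ • Dp (Dp y) t))
    (δx : ℝ → EuclideanSpace ℝ (Fin d)) (hδx : ContDiff ℝ 2 δx)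
    (hδx0 : δx 0 = 0) (hδxT : δx T = 0) :
    deriv (fun ε : ℝ =>
      ∫ t in (0:ℝ)..T,
        (L (x t + ε • δx t) (deriv x t + ε • deriv δx t)
          + L (y t + ε • δx t) (deriv y t + ε • deriv δx t)
          - ρ * (inner ℝ (Dm (fun s => x s + ε • δx s) t)
                  (Dp (fun s => y s + ε • δx s) t) : ℝ))) 0 = 0 := by
  classical
  have hxc : Continuous x := hx.continuous
  have hx' : Continuous (deriv x) := (contDiff_one_deriv hx).continuous
  have hyc : Continuous y := hy.continuous
  have hy' : Continuous (deriv y) := (contDiff_one_deriv hy).continuous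
  have hδc : Continuous δx := hδx.continuous
  have hδ' : Continuous (deriv δx) := (contDiff_one_deriv hδx).continuous
  have hLvj : ContDiff ℝ 1 (fun qv : EuclideanSpace ℝ (Fin d) × EuclideanSpace ℝ (Fin d) =>
      Lv qv.1 qv.2) := contDiff_grad_snd hL hLv
  have hLqj : ContDiff ℝ 1 (fun qv : EuclideanSpace ℝ (Fin d) × EuclideanSpace ℝ (Fin d) =>
      Lq qv.1 qv.2) := contDiff_grad_fst hL hLq
  -- derivatives of the two Lagrangian integrals at 0
  have hVx : HasDerivAt (fun ε : ℝ => ∫ t in (0:ℝ)..T,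
        L (x t + ε • δx t) (deriv x t + ε • deriv δx t))
      (ρ * ∫ t in (0:ℝ)..T, (inner ℝ (Dm (Dm x) t) (δx t) : ℝ)) 0 := by
    have h1 := hasDerivAt_Lpart hL hLq hLv T hx hδx
    rwa [variation_integral_eq hL hLq hLv hT.le hx hδx hδx0 hδxT hELx] at h1
  have hVy : HasDerivAt (fun ε : ℝ => ∫ t in (0:ℝ)..T,
        L (y t + ε • δx t) (deriv y t + ε • deriv δx t))
      (ρ * ∫ t in (0:ℝ)..T, (inner ℝ (Dp (Dp y) t) (δx t) : ℝ)) 0 := by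
    have h1 := hasDerivAt_Lpart hL hLq hLv T hy hδx
    rwa [variation_integral_eq hL hLq hLv hT.le hy hδx hδx0 hδxT hELy] at h1
  set s2 : ℝ := ∫ t in (0:ℝ)..T, (inner ℝ (Dm (Dm x) t) (δx t) : ℝ) with hs2def
  set s1 : ℝ := ∫ t in (0:ℝ)..T, (inner ℝ (Dp (Dp y) t) (δx t) : ℝ) with hs1def
  set a : ℝ → ℝ := fun t => (inner ℝ (Dm x t) (Dp y t) : ℝ) with hadef
  set b1 : ℝ → ℝ := fun t => (inner ℝ (Dm δx t) (Dp y t) : ℝ) with hb1def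
  set b2 : ℝ → ℝ := fun t => (inner ℝ (Dm x t) (Dp δx t) : ℝ) with hb2def
  set c : ℝ → ℝ := fun t => (inner ℝ (Dm δx t) (Dp δx t) : ℝ) with hcdef
  set bb : ℝ → ℝ := fun t => b1 t + b2 t with hbbdef
  -- linearity of the fractional operators on the varied curves
  have hDmε : ∀ ε : ℝ, Dm (fun s => x s + ε • δx s) = fun t => Dm x t + ε • Dm δx t := by
    intro ε
    have h0 : (fun s => x s + ε • δx s) = x + ε • δx := rfl
    rw [h0, hDm_add, hDm_smul]; rfl
  have hDpε : ∀ ε : ℝ, Dp (fun s => y s + ε • δx s) = fun t => Dp y t + ε • Dp δx t := by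
    intro ε
    have h0 : (fun s => y s + ε • δx s) = y + ε • δx := rfl
    rw [h0, hDp_add, hDp_smul]; rfl
  have hDpDpε : ∀ ε : ℝ, Dp (Dp (fun s => y s + ε • δx s))
      = fun t => Dp (Dp y) t + ε • Dp (Dp δx) t := by
    intro ε
    rw [hDpε ε]
    have h0 : (fun t : ℝ => Dp y t + ε • Dp δx t) = Dp y + ε • Dp δx := rfl
    rw [h0, hDp_add, hDp_smul]; rfl
  have hcross : ∀ (ε t : ℝ),
      (inner ℝ (Dm (fun s => x s + ε • δx s) t) (Dp (fun s => y s + ε • δx s) t) : ℝ)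
        = a t + ε * bb t + ε ^ 2 * c t := by
    intro ε t
    rw [hDmε ε, hDpε ε]
    simp only [hbbdef, hadef, hb1def, hb2def, hcdef, inner_add_left, inner_add_right,
      real_inner_smul_left, real_inner_smul_right]
    ring
  have comm2 : ∀ u v : ℝ → EuclideanSpace ℝ (Fin d),
      (∫ t in (0:ℝ)..T, (inner ℝ (u t) (v t) : ℝ)) = ∫ t in (0:ℝ)..T, (inner ℝ (v t) (u t) : ℝ) :=
    fun u v => intervalIntegral.integral_congr (fun t _ => real_inner_comm _ _)
  have hs1b1 : s1 = ∫ t in (0:ℝ)..T, b1 t := by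
    rw [hs1def, comm2 (Dp (Dp y)) δx, ← hibp (Dp y) δx, comm2 (Dp y) (Dm δx)]
  have hs2b2 : s2 = ∫ t in (0:ℝ)..T, b2 t := by
    rw [hs2def, comm2 (Dm (Dm x)) δx, hibp δx (Dm x)]
  -- continuity of the Lagrangian integrands
  have hLxc : ∀ ε : ℝ, Continuous (fun t => L (x t + ε • δx t) (deriv x t + ε • deriv δx t)) :=
    fun ε => hL.continuous.comp (f := fun t => (x t + ε • δx t, deriv x t + ε • deriv δx t))
      (by fun_prop)
  have hLyc : ∀ ε : ℝ, Continuous (fun t => L (y t + ε • δx t) (deriv y t + ε • deriv δx t)) :=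
    fun ε => hL.continuous.comp (f := fun t => (y t + ε • δx t, deriv y t + ε • deriv δx t))
      (by fun_prop)
  by_cases h3 : ∃ e1 e2 e3 : ℝ,
      (IntervalIntegrable (fun t => a t + e1 * bb t + e1 ^ 2 * c t) MeasureTheory.volume 0 T) ∧
      (IntervalIntegrable (fun t => a t + e2 * bb t + e2 ^ 2 * c t) MeasureTheory.volume 0 T) ∧
      (IntervalIntegrable (fun t => a t + e3 * bb t + e3 ^ 2 * c t) MeasureTheory.volume 0 T) ∧
      e1 ≠ e2 ∧ e1 ≠ e3 ∧ e2 ≠ e3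
  · -- good case: the coefficient functions are integrable
    obtain ⟨e1, e2, e3, he1, he2, he3, h12, h13, h23⟩ := h3
    obtain ⟨hIa, hIbb, hIc⟩ := integrable_coeffs he1 he2 he3 h12 h13 h23
    have hint : ∀ ε : ℝ, IntervalIntegrable (fun t => a t + ε * bb t + ε ^ 2 * c t)
        MeasureTheory.volume 0 T :=
      fun ε => (hIa.add (hIbb.const_mul ε)).add (hIc.const_mul (ε ^ 2))
    have hval : ∀ ε : ℝ, (∫ t in (0:ℝ)..T, (a t + ε * bb t + ε ^ 2 * c t))
        = (∫ t in (0:ℝ)..T, a t) + ε * (∫ t in (0:ℝ)..T, bb t)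
          + ε ^ 2 * (∫ t in (0:ℝ)..T, c t) := by
      intro ε
      rw [intervalIntegral.integral_add (hIa.add (hIbb.const_mul ε)) (hIc.const_mul (ε ^ 2)),
        intervalIntegral.integral_add hIa (hIbb.const_mul ε),
        intervalIntegral.integral_const_mul, intervalIntegral.integral_const_mul]
    set A : ℝ := ∫ t in (0:ℝ)..T, a t with hAdef
    set Bv : ℝ := ∫ t in (0:ℝ)..T, bb t with hBvdef
    set Cv : ℝ := ∫ t in (0:ℝ)..T, c t with hCvdef
    have hFeq : (fun ε : ℝ =>
        ∫ t in (0:ℝ)..T,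
          (L (x t + ε • δx t) (deriv x t + ε • deriv δx t)
            + L (y t + ε • δx t) (deriv y t + ε • deriv δx t)
            - ρ * (inner ℝ (Dm (fun s => x s + ε • δx s) t)
                    (Dp (fun s => y s + ε • δx s) t) : ℝ)))
        = fun ε : ℝ =>
          ((∫ t in (0:ℝ)..T, L (x t + ε • δx t) (deriv x t + ε • deriv δx t))
            + ∫ t in (0:ℝ)..T, L (y t + ε • δx t) (deriv y t + ε • deriv δx t))
          - ρ * (A + ε * Bv + ε ^ 2 * Cv) := by
      funext ε
      have step1 : (∫ t in (0:ℝ)..T,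
          (L (x t + ε • δx t) (deriv x t + ε • deriv δx t)
            + L (y t + ε • δx t) (deriv y t + ε • deriv δx t)
            - ρ * (inner ℝ (Dm (fun s => x s + ε • δx s) t)
                    (Dp (fun s => y s + ε • δx s) t) : ℝ)))
          = ∫ t in (0:ℝ)..T,
            ((L (x t + ε • δx t) (deriv x t + ε • deriv δx t)
              + L (y t + ε • δx t) (deriv y t + ε • deriv δx t))
            - ρ * (a t + ε * bb t + ε ^ 2 * c t)) :=
        intervalIntegral.integral_congr (fun t _ => by simp only [hcross ε t])
      have hLLc : Continuous fun t => L (x t + ε • δx t) (deriv x t + ε • deriv δx t)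
          + L (y t + ε • δx t) (deriv y t + ε • deriv δx t) := (hLxc ε).add (hLyc ε)
      rw [step1, intervalIntegral.integral_sub
          (hLLc.intervalIntegrable 0 T) ((hint ε).const_mul ρ),
        intervalIntegral.integral_add ((hLxc ε).intervalIntegrable 0 T)
          ((hLyc ε).intervalIntegrable 0 T),
        intervalIntegral.integral_const_mul, hval ε]
    have hquad : HasDerivAt (fun ε : ℝ => ρ * (A + ε * Bv + ε ^ 2 * Cv)) (ρ * Bv) 0 := by
      have ha1 : HasDerivAt (fun ε : ℝ => A + ε * Bv) Bv 0 := by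
        simpa using ((hasDerivAt_id (0:ℝ)).mul_const Bv).const_add A
      have hb1' : HasDerivAt (fun ε : ℝ => ε ^ 2 * Cv) 0 0 := by
        simpa using (hasDerivAt_pow 2 (0:ℝ)).mul_const Cv
      have h0 : HasDerivAt (fun ε : ℝ => A + ε * Bv + ε ^ 2 * Cv) Bv 0 := by
        have := ha1.add hb1'; rw [add_zero] at this; exact this
      simpa using h0.const_mul ρ
    have hder : deriv (fun ε : ℝ =>
        ∫ t in (0:ℝ)..T,
          (L (x t + ε • δx t) (deriv x t + ε • deriv δx t)
            + L (y t + ε • δx t) (deriv y t + ε • deriv δx t)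
            - ρ * (inner ℝ (Dm (fun s => x s + ε • δx s) t)
                    (Dp (fun s => y s + ε • δx s) t) : ℝ))) 0
        = ρ * s2 + ρ * s1 - ρ * Bv := by
      rw [hFeq]
      exact ((hVx.add hVy).sub hquad).deriv
    rw [hder]
    by_cases hb1int : IntervalIntegrable b1 MeasureTheory.volume 0 T
    · -- b1 integrable: B = s1 + s2 directly
      have hb2int : IntervalIntegrable b2 MeasureTheory.volume 0 T := by
        have h4 := hIbb.sub hb1int
        have heq : (fun t => bb t - b1 t) = b2 := by
          funext t; simp [hbbdef]
        rwa [heq] at h4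
      have hBv : Bv = s1 + s2 := by
        rw [hBvdef,
          show (∫ t in (0:ℝ)..T, bb t) = ∫ t in (0:ℝ)..T, (b1 t + b2 t) from
            intervalIntegral.integral_congr (fun t _ => by simp [hbbdef]),
          intervalIntegral.integral_add hb1int hb2int, hs1b1, hs2b2]
      rw [hBv]; ring
    · -- b1 not integrable: then s1 = s2 = 0 and B = 0
      have hb2not : ¬ IntervalIntegrable b2 MeasureTheory.volume 0 T := by
        intro hb2int
        apply hb1int
        have h4 := hIbb.sub hb2int
        have heq : (fun t => bb t - b2 t) = b1 := by
          funext t; simp [hbbdef]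
        rwa [heq] at h4
      have hs1_0 : s1 = 0 := by
        rw [hs1b1]; exact intervalIntegral.integral_undef hb1int
      have hs2_0 : s2 = 0 := by
        rw [hs2b2]; exact intervalIntegral.integral_undef hb2not
      -- transform via fractional integration by parts
      have hPval : ∀ ε : ℝ, (∫ t in (0:ℝ)..T, (a t + ε * bb t + ε ^ 2 * c t))
          = ∫ t in (0:ℝ)..T, ((inner ℝ (x t) (Dp (Dp y) t) : ℝ)
              + ε * ((inner ℝ (δx t) (Dp (Dp y) t) : ℝ) + (inner ℝ (x t) (Dp (Dp δx) t) : ℝ))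
              + ε ^ 2 * (inner ℝ (δx t) (Dp (Dp δx) t) : ℝ)) := by
        intro ε
        have h1 : (∫ t in (0:ℝ)..T, (a t + ε * bb t + ε ^ 2 * c t))
            = ∫ t in (0:ℝ)..T, (inner ℝ (Dm (fun s => x s + ε • δx s) t)
                (Dp (fun s => y s + ε • δx s) t) : ℝ) :=
          (intervalIntegral.integral_congr (fun t _ => by simp only [hcross ε t])).symm
        rw [h1, comm2 (Dm (fun s => x s + ε • δx s)) (Dp (fun s => y s + ε • δx s)),
          hibp (Dp (fun s => y s + ε • δx s)) (fun s => x s + ε • δx s)]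
        apply intervalIntegral.integral_congr
        intro t _
        simp only [hDpDpε ε, inner_add_left, inner_add_right,
          real_inner_smul_left, real_inner_smul_right]
        ring
      set a' : ℝ → ℝ := fun t => (inner ℝ (x t) (Dp (Dp y) t) : ℝ) with ha'def
      set b1' : ℝ → ℝ := fun t => (inner ℝ (δx t) (Dp (Dp y) t) : ℝ) with hb1'def
      set b2' : ℝ → ℝ := fun t => (inner ℝ (x t) (Dp (Dp δx) t) : ℝ) with hb2'def
      set c' : ℝ → ℝ := fun t => (inner ℝ (δx t) (Dp (Dp δx) t) : ℝ) with hc'def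
      set bb' : ℝ → ℝ := fun t => b1' t + b2' t with hbb'def
      -- continuity of Dp (Dp y) on [0, T] from the Euler–Lagrange equation
      have hpy1 : ContDiff ℝ 1 (fun s => Lv (y s) (deriv y s)) :=
        hLvj.comp (ContDiff.prodMk (hy.of_le (by norm_num)) (contDiff_one_deriv hy))
      have hcycont : Continuous (fun t => ρ⁻¹ • (Lq (y t) (deriv y t)
          - deriv (fun s => Lv (y s) (deriv y s)) t)) :=
        by have hc := (hLqj.continuous.comp (hyc.prodMk hy')).sub
             (hpy1.continuous_deriv le_rfl); exact hc.const_smul ρ⁻¹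
      have hcy : ∀ t ∈ Set.Icc (0:ℝ) T, Dp (Dp y) t
          = ρ⁻¹ • (Lq (y t) (deriv y t) - deriv (fun s => Lv (y s) (deriv y s)) t) := by
        intro t ht
        have h1 := hELy t ht
        have h2 : Lq (y t) (deriv y t) - deriv (fun s => Lv (y s) (deriv y s)) t
            = ρ • Dp (Dp y) t := by
          have h4 := congrArg Neg.neg h1
          rw [neg_neg, neg_sub] at h4
          exact h4
        rw [h2]
        exact (inv_smul_smul₀ (ne_of_gt hρ) _).symm
      have hB0 : Bv = 0 := by
        by_cases h3' : ∃ f1 f2 f3 : ℝ,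
            (IntervalIntegrable (fun t => a' t + f1 * bb' t + f1 ^ 2 * c' t)
              MeasureTheory.volume 0 T) ∧
            (IntervalIntegrable (fun t => a' t + f2 * bb' t + f2 ^ 2 * c' t)
              MeasureTheory.volume 0 T) ∧
            (IntervalIntegrable (fun t => a' t + f3 * bb' t + f3 ^ 2 * c' t)
              MeasureTheory.volume 0 T) ∧
            f1 ≠ f2 ∧ f1 ≠ f3 ∧ f2 ≠ f3
        · obtain ⟨f1, f2, f3, hf1, hf2, hf3, g12, g13, g23⟩ := h3'
          obtain ⟨hIa', hIbb', hIc'⟩ := integrable_coeffs hf1 hf2 hf3 g12 g13 g23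
          have hvalP : ∀ ε : ℝ, (∫ t in (0:ℝ)..T, (a' t + ε * bb' t + ε ^ 2 * c' t))
              = (∫ t in (0:ℝ)..T, a' t) + ε * (∫ t in (0:ℝ)..T, bb' t)
                + ε ^ 2 * (∫ t in (0:ℝ)..T, c' t) := by
            intro ε
            rw [intervalIntegral.integral_add (hIa'.add (hIbb'.const_mul ε))
                (hIc'.const_mul (ε ^ 2)),
              intervalIntegral.integral_add hIa' (hIbb'.const_mul ε),
              intervalIntegral.integral_const_mul, intervalIntegral.integral_const_mul]
          have heq2 : ∀ ε : ℝ, A + ε * Bv + ε ^ 2 * Cv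
              = (∫ t in (0:ℝ)..T, a' t) + ε * (∫ t in (0:ℝ)..T, bb' t)
                + ε ^ 2 * (∫ t in (0:ℝ)..T, c' t) :=
            fun ε => (hval ε).symm.trans ((hPval ε).trans (hvalP ε))
          have hIb1' : IntervalIntegrable b1' MeasureTheory.volume 0 T := by
            apply II_of_eqOn (g := fun t => (inner ℝ (δx t) (ρ⁻¹ • (Lq (y t) (deriv y t)
                - deriv (fun s => Lv (y s) (deriv y s)) t)) : ℝ)) (hδc.inner hcycont)
            intro t ht
            rw [Set.uIcc_of_le hT.le] at ht
            simp only [hb1'def]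
            rw [hcy t ht]
          have hIb2' : IntervalIntegrable b2' MeasureTheory.volume 0 T := by
            have h4 := hIbb'.sub hIb1'
            have heq : (fun t => bb' t - b1' t) = b2' := by
              funext t; simp [hbb'def]
            rwa [heq] at h4
          have hsplit : (∫ t in (0:ℝ)..T, bb' t)
              = (∫ t in (0:ℝ)..T, b1' t) + ∫ t in (0:ℝ)..T, b2' t := by
            rw [show (∫ t in (0:ℝ)..T, bb' t) = ∫ t in (0:ℝ)..T, (b1' t + b2' t) from
                intervalIntegral.integral_congr (fun t _ => by simp [hbb'def])]
            exact intervalIntegral.integral_add hIb1' hIb2'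
          have hb1's1 : (∫ t in (0:ℝ)..T, b1' t) = s1 := by
            simp only [hb1'def]
            rw [comm2 δx (Dp (Dp y)), ← hs1def]
          have hb2'b2 : (∫ t in (0:ℝ)..T, b2' t) = ∫ t in (0:ℝ)..T, b2 t := by
            simp only [hb2'def]
            rw [← hibp (Dp δx) x, comm2 (Dp δx) (Dm x)]
          have hb2_0 : (∫ t in (0:ℝ)..T, b2 t) = 0 := intervalIntegral.integral_undef hb2not
          have u1 := heq2 1
          have u2 := heq2 (-1)
          rw [hsplit, hb1's1, hb2'b2, hb2_0, hs1_0] at u1 u2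
          norm_num at u1 u2
          linarith
        · obtain ⟨u, v, huv⟩ := small_of_no_three (S := {ε : ℝ |
            IntervalIntegrable (fun t => a' t + ε * bb' t + ε ^ 2 * c' t)
              MeasureTheory.volume 0 T}) h3'
          have hzero : ∀ ε : ℝ, ε ≠ u → ε ≠ v → A + ε * Bv + ε ^ 2 * Cv = 0 := by
            intro ε hu hv
            have hnot : ¬ IntervalIntegrable (fun t => a' t + ε * bb' t + ε ^ 2 * c' t)
                MeasureTheory.volume 0 T := by
              intro hmem
              rcases huv ε hmem with h | h
              exacts [hu h, hv h]
            rw [← hval ε, hPval ε]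
            exact intervalIntegral.integral_undef hnot
          exact quad_B_eq_zero hzero
      rw [hB0, hs1_0, hs2_0]; ring
  · -- bad case: the action is 0 off at most two parameters
    obtain ⟨u, v, huv⟩ := small_of_no_three (S := {ε : ℝ |
      IntervalIntegrable (fun t => a t + ε * bb t + ε ^ 2 * c t) MeasureTheory.volume 0 T}) h3
    have hF0 : ∀ ε : ℝ, ε ≠ u → ε ≠ v →
        (∫ t in (0:ℝ)..T,
          (L (x t + ε • δx t) (deriv x t + ε • deriv δx t)
            + L (y t + ε • δx t) (deriv y t + ε • deriv δx t)
            - ρ * (inner ℝ (Dm (fun s => x s + ε • δx s) t)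
                    (Dp (fun s => y s + ε • δx s) t) : ℝ))) = 0 := by
      intro ε hu hv
      refine intervalIntegral.integral_undef (fun hii => ?_)
      have hℓ := ((hLxc ε).add (hLyc ε)).intervalIntegrable (μ := MeasureTheory.volume) 0 T
      have h4 := hℓ.sub hii
      have heq : (fun t => (L (x t + ε • δx t) (deriv x t + ε • deriv δx t)
            + L (y t + ε • δx t) (deriv y t + ε • deriv δx t))
          - (L (x t + ε • δx t) (deriv x t + ε • deriv δx t)
            + L (y t + ε • δx t) (deriv y t + ε • deriv δx t)
            - ρ * (inner ℝ (Dm (fun s => x s + ε • δx s) t)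
                    (Dp (fun s => y s + ε • δx s) t) : ℝ)))
          = fun t => ρ * (a t + ε * bb t + ε ^ 2 * c t) := by
        funext t
        rw [hcross ε t]
        ring
      replace h4 : IntervalIntegrable (fun t => ρ * (a t + ε * bb t + ε ^ 2 * c t))
          MeasureTheory.volume 0 T := by rw [← heq]; exact h4
      have h5 := h4.const_mul ρ⁻¹
      have heq2 : (fun t => ρ⁻¹ * (ρ * (a t + ε * bb t + ε ^ 2 * c t)))
          = fun t => a t + ε * bb t + ε ^ 2 * c t := by
        funext t
        field_simp
      rw [heq2] at h5
      rcases huv ε h5 with h | h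
      exacts [hu h, hv h]
    have hBfin : ((({u, v} : Set ℝ)) \ {0}).Finite :=
      (Set.Finite.insert u (Set.finite_singleton v)).diff
    have hopen : ((({u, v} : Set ℝ)) \ {0})ᶜ ∈ nhds (0:ℝ) := by
      refine (hBfin.isClosed.isOpen_compl).mem_nhds ?_
      simp
    have hev : (fun ε : ℝ =>
        ∫ t in (0:ℝ)..T,
          (L (x t + ε • δx t) (deriv x t + ε • deriv δx t)
            + L (y t + ε • δx t) (deriv y t + ε • deriv δx t)
            - ρ * (inner ℝ (Dm (fun s => x s + ε • δx s) t)
                    (Dp (fun s => y s + ε • δx s) t) : ℝ)))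
        =ᶠ[nhdsWithin (0:ℝ) {(0:ℝ)}ᶜ] (fun _ => (0:ℝ)) := by
      filter_upwards [mem_nhdsWithin_of_mem_nhds hopen, self_mem_nhdsWithin] with ε hε hne
      have hεuv : ε ∉ ({u, v} : Set ℝ) := fun hmem => hε ⟨hmem, hne⟩
      exact hF0 ε (fun h => hεuv (by simp [h])) (fun h => hεuv (by simp [h]))
    by_cases hd : DifferentiableAt ℝ (fun ε : ℝ =>
        ∫ t in (0:ℝ)..T,
          (L (x t + ε • δx t) (deriv x t + ε • deriv δx t)
            + L (y t + ε • δx t) (deriv y t + ε • deriv δx t)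
            - ρ * (inner ℝ (Dm (fun s => x s + ε • δx s) t)
                    (Dp (fun s => y s + ε • δx s) t) : ℝ))) 0
    · have h1 := (hd.continuousAt.tendsto).mono_left (nhdsWithin_le_nhds
        (s := ({(0:ℝ)}ᶜ : Set ℝ)))
      have h2 : Filter.Tendsto (fun ε : ℝ =>
          ∫ t in (0:ℝ)..T,
            (L (x t + ε • δx t) (deriv x t + ε • deriv δx t)
              + L (y t + ε • δx t) (deriv y t + ε • deriv δx t)
              - ρ * (inner ℝ (Dm (fun s => x s + ε • δx s) t)
                      (Dp (fun s => y s + ε • δx s) t) : ℝ)))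
          (nhdsWithin (0:ℝ) {(0:ℝ)}ᶜ) (nhds 0) := by
        rw [Filter.tendsto_congr' hev]
        exact tendsto_const_nhds
      have hΦ0 := tendsto_nhds_unique h1 h2
      have hev' : (fun ε : ℝ =>
          ∫ t in (0:ℝ)..T,
            (L (x t + ε • δx t) (deriv x t + ε • deriv δx t)
              + L (y t + ε • δx t) (deriv y t + ε • deriv δx t)
              - ρ * (inner ℝ (Dm (fun s => x s + ε • δx s) t)
                      (Dp (fun s => y s + ε • δx s) t) : ℝ)))
          =ᶠ[nhds (0:ℝ)] (fun _ => (0:ℝ)) := by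
        filter_upwards [hopen] with ε hε
        by_cases hz : ε = 0
        · rw [hz]
          exact hΦ0
        · have hεuv : ε ∉ ({u, v} : Set ℝ) := fun hmem => hε ⟨hmem, hz⟩
          exact hF0 ε (fun h => hεuv (by simp [h])) (fun h => hεuv (by simp [h]))
      rw [hev'.deriv_eq]
      simp
    · exact deriv_zero_of_not_differentiableAt hd
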